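/- Let $C_n$ be the cycle on $n$ vertices and $S$ a cut set of $C_n$ with corresponding minimal prime $P_S$ of $J_{C_n}$. Define $f_S=\prod_{s\in S}f_{s_is_j}\prod_{v\in D_S}x_v$, where $\{s_i,s_j\}=N_{C_n}(s)$ and $D_S$ is the set of vertices of degree $2$ in $C_n\setminus S$. Then $(J_{C_n}:f_S)=P_S$. -/

import Mathlib

open MvPolynomial

set_option synthInstance.maxHeartbeats 1000000

namespace Paper

noncomputable section

variable (K : Type) [Field K]

/-- The v-number of a graded ideal `I`: the least `d` such that there is a homogeneous
polynomial `f` of degree `d` with `(I : f)` an associated prime of `R/I`. -/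
def vNumber {σ : Type} (I : Ideal (MvPolynomial σ K)) : ℕ :=
  sInf {d : ℕ | ∃ f : MvPolynomial σ K, f.IsHomogeneous d ∧
    IsAssociatedPrime (Submodule.colon I (Ideal.span {f})) (MvPolynomial σ K ⧸ I)}

/-- The local v-number of `I` at a prime `P`. -/
def vLocal {σ : Type} (I P : Ideal (MvPolynomial σ K)) : ℕ :=
  sInf {d : ℕ | ∃ f : MvPolynomial σ K, f.IsHomogeneous d ∧
    Submodule.colon I (Ideal.span {f}) = P}

/-- The edge binomial `f_{ij} = x_i y_j - x_j y_i`. -/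
def bedge {V : Type} (i j : V) : MvPolynomial (V ⊕ V) K :=
  X (Sum.inl i) * X (Sum.inr j) - X (Sum.inl j) * X (Sum.inr i)

/-- The binomial edge ideal of a graph `G`. -/
def beIdeal {V : Type} (G : SimpleGraph V) : Ideal (MvPolynomial (V ⊕ V) K) :=
  Ideal.span {p | ∃ i j : V, G.Adj i j ∧ p = bedge K i j}

/-- The (monomial) edge ideal of a graph `G`. -/
def edgeIdealM {V : Type} (G : SimpleGraph V) : Ideal (MvPolynomial V K) :=
  Ideal.span {p | ∃ i j : V, G.Adj i j ∧ p = X i * X j}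

/-- `i` and `j` are connected by a walk in `G` avoiding the set `S`. -/
def ReachAvoid {V : Type} (G : SimpleGraph V) (S : Set V) (i j : V) : Prop :=
  ∃ w : G.Walk i j, ∀ v ∈ w.support, v ∉ S

/-- The disjoint union of complete graphs on the connected components of `G ∖ S`. -/
def tildeG {V : Type} (G : SimpleGraph V) (S : Set V) : SimpleGraph V where
  Adj i j := i ≠ j ∧ ReachAvoid G S i j
  symm := ⟨by
    rintro i j ⟨hne, w, hw⟩
    exact ⟨hne.symm, w.reverse, by
      intro v hv
      exact hw v (by simpa [SimpleGraph.Walk.support_reverse] using hv)⟩⟩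
  loopless := ⟨fun i h => h.1 rfl⟩

/-- The minimal prime `P_S` of the binomial edge ideal corresponding to a cut set `S`. -/
def PSIdeal {V : Type} (G : SimpleGraph V) (S : Set V) : Ideal (MvPolynomial (V ⊕ V) K) :=
  Ideal.span ((fun i => (X (Sum.inl i) : MvPolynomial (V ⊕ V) K)) '' S ∪
      (fun i => (X (Sum.inr i) : MvPolynomial (V ⊕ V) K)) '' S)
    ⊔ beIdeal K (tildeG G S)

/-- Number of connected components of the induced subgraph on the complement of `S`. -/
def numComp {V : Type} (G : SimpleGraph V) (S : Set V) : ℕ :=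
  Nat.card ((G.induce Sᶜ).ConnectedComponent)

/-- `S` is a cut set of `G`. -/
def IsCutSet {V : Type} (G : SimpleGraph V) (S : Set V) : Prop :=
  ∀ s ∈ S, numComp G (S \ {s}) < numComp G S

/-- `v` is a cut vertex of `G`. -/
def IsCutVertex {V : Type} (G : SimpleGraph V) (v : V) : Prop :=
  numComp G (∅ : Set V) < numComp G {v}

/-- `G` is a cone graph: some vertex is adjacent to all others. -/
def IsConeGraph {V : Type} (G : SimpleGraph V) : Prop :=
  ∃ v : V, ∀ u : V, u ≠ v → G.Adj v u

/-- `G` (with its labelling by `Fin n`) is a closed graph. -/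
def IsClosedGraph {n : ℕ} (G : SimpleGraph (Fin n)) : Prop :=
  ∀ i j k : Fin n, i < j → j < k → G.Adj i k → G.Adj i j ∧ G.Adj j k

/-- `R/I` is Cohen-Macaulay: there is a regular sequence (inside the irrelevant
maximal ideal) on `R/I` whose length is the Krull dimension of `R/I`. -/
def IsCMQuot {σ : Type} (I : Ideal (MvPolynomial σ K)) : Prop :=
  ∃ rs : List (MvPolynomial σ K),
    (∀ f ∈ rs, f ∈ Ideal.span (Set.range (X : σ → MvPolynomial σ K))) ∧
    RingTheory.Sequence.IsRegular (MvPolynomial σ K ⧸ I)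
      (rs.map (Ideal.Quotient.mk I)) ∧
    ((rs.length : ℕ) : WithBot (WithTop ℕ)) = ringKrullDim (MvPolynomial σ K ⧸ I)

section Regularity

variable {σ : Type} [Fintype σ] [DecidableEq σ]

/-- An arbitrary linear order on a finite type. -/
def fintypeLO (σ : Type) [Fintype σ] [DecidableEq σ] : LinearOrder σ :=
  LinearOrder.lift' (Fintype.equivFin σ) (Fintype.equivFin σ).injective

/-- Term of homological degree `i` of the Koszul complex of `R/I` with respect to all the
variables; its homology computes `Tor_i(R/I, K)`. -/
abbrev KC (I : Ideal (MvPolynomial σ K)) (i : ℕ) : Type :=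
  {T : Finset σ // T.card = i} → MvPolynomial σ K ⧸ I

/-- The Koszul differential. -/
def koszD (I : Ideal (MvPolynomial σ K)) (i : ℕ) (f : KC K I (i + 1)) : KC K I i :=
  letI LO := fintypeLO σ
  letI : (p : Prop) → Decidable p := Classical.propDecidable
  fun T => ∑ t ∈ (Finset.univ \ T.1).attach,
    ((-1 : MvPolynomial σ K ⧸ I) ^ ((T.1.filter (fun a => LO.lt a t.1)).card)) *
      (Ideal.Quotient.mk I (X t.1) *
        f ⟨insert t.1 T.1, by
          rw [Finset.card_insert_of_notMem (Finset.mem_sdiff.mp t.2).2, T.2]⟩)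

/-- Being a cycle in the Koszul complex. -/
def isCycle (I : Ideal (MvPolynomial σ K)) : (i : ℕ) → KC K I i → Prop
  | 0, _ => True
  | (i + 1), f => koszD K I i f = 0

/-- Nonvanishing of the graded Betti number `β_{i,j}(R/I)`: the `i`-th Koszul homology has a
nonzero class of internal degree `j`. -/
def bettiNe (I : Ideal (MvPolynomial σ K)) (i j : ℕ) : Prop :=
  ∃ f : KC K I i,
    (∀ T, ∃ p : MvPolynomial σ K, p.IsHomogeneous (j - i) ∧ Ideal.Quotient.mk I p = f T) ∧
    isCycle K I i f ∧ ¬ ∃ g : KC K I (i + 1), koszD K I i g = f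

/-- The Castelnuovo-Mumford regularity of `R/I`, as `max { j - i : β_{i,j}(R/I) ≠ 0 }`. -/
def reg (I : Ideal (MvPolynomial σ K)) : ℕ :=
  sSup {r : ℕ | ∃ i j : ℕ, j = i + r ∧ bettiNe K I i j}

end Regularity

end

end Paper

namespace Paper

noncomputable section

variable (K : Type) [Field K]

/-!
`P_S ⊆ (J : f_S)`: for `s ∈ S` the identity `x_s f_{s-1,s+1} = x_{s-1} f_{s,s+1} + x_{s+1} f_{s-1,s}`
puts `x_s f_S` and `y_s f_S` in `J`, and along a path of `C_n ∖ S` from `i` to `j`, `f_{ij}` times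
the product of the `x_v` over the inner vertices lies in `J`; inner vertices have degree `2` in
`C_n ∖ S`, so they lie in `D_S`.

`(J : f_S) ⊆ P_S`: the map `φ : x_i ↦ s_{[i]} z_i, y_i ↦ t_{[i]} z_i` (zero on `S`), where `[i]` is
the component of `i`, has kernel `P_S`, because modulo `P_S` every polynomial reduces to a
combination of standard monomials, on which `φ` is injective. Since `S` is a cut set, `s - 1` and
`s + 1` lie in different components, so `φ f_S ≠ 0`, and `g f_S ∈ J ⊆ ker φ` forces `φ g = 0`.
-/

open SimpleGraph Sum

theorem _root_.SimpleGraph.Walk.IsPath.exists_adj_ne_of_mem_support {V : Type} {G : SimpleGraph V}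
    {i j : V} {p : G.Walk i j} (hp : p.IsPath) {v : V} (hv : v ∈ p.support) (hvi : v ≠ i)
    (hvj : v ≠ j) :
    ∃ u u', u ≠ u' ∧ G.Adj v u ∧ G.Adj v u' ∧ u ∈ p.support ∧ u' ∈ p.support := by
  induction p with
  | nil => simp_all
  | @cons i b j hib p ih =>
    rw [Walk.cons_isPath_iff] at hp
    have hvp : v ∈ p.support := by simpa [hvi] using hv
    by_cases hvb : v = b
    · subst hvb
      obtain ⟨c, hvc, q, rfl⟩ := p.exists_eq_cons_of_ne hvj
      refine ⟨i, c, ?_, hib.symm, hvc, by simp, by simp⟩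
      rintro rfl
      exact hp.2 (by simp)
    · obtain ⟨u, u', hne, hu, hu', hup, hup'⟩ := ih hp.1 hvp hvb hvj
      exact ⟨u, u', hne, hu, hu', by simp [hup], by simp [hup']⟩

section ReachAvoid

variable {V : Type} {G : SimpleGraph V} {S : Set V} {u v w : V}

theorem ReachAvoid.notMem_left (h : ReachAvoid G S u v) : u ∉ S :=
  h.elim fun p hp => hp u p.start_mem_support

theorem ReachAvoid.notMem_right (h : ReachAvoid G S u v) : v ∉ S :=
  h.elim fun p hp => hp v p.end_mem_support

theorem ReachAvoid.refl (hu : u ∉ S) : ReachAvoid G S u u :=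
  ⟨.nil, by simpa using hu⟩

theorem ReachAvoid.symm (h : ReachAvoid G S u v) : ReachAvoid G S v u :=
  h.elim fun p hp => ⟨p.reverse, by simpa using hp⟩

theorem ReachAvoid.trans (h : ReachAvoid G S u v) (h' : ReachAvoid G S v w) :
    ReachAvoid G S u w :=
  h.elim fun p hp => h'.elim fun q hq =>
    ⟨p.append q, fun x hx => ((Walk.mem_support_append_iff _ _).1 hx).elim (hp x) (hq x)⟩

theorem _root_.SimpleGraph.Adj.reachAvoid (h : G.Adj u v) (hu : u ∉ S) (hv : v ∉ S) :
    ReachAvoid G S u v :=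
  ⟨h.toWalk, by simp [hu, hv]⟩

theorem reachAvoid_iff_reachable_induce (hu : u ∉ S) (hv : v ∉ S) :
    ReachAvoid G S u v ↔ (G.induce Sᶜ).Reachable ⟨u, hu⟩ ⟨v, hv⟩ := by
  constructor
  · rintro ⟨p, hp⟩
    exact ⟨p.induce Sᶜ hp⟩
  · rintro ⟨p⟩
    refine ⟨p.map (Embedding.induce Sᶜ).toHom, fun x hx => ?_⟩
    obtain ⟨y, -, rfl⟩ := List.mem_map.1 (Walk.support_map _ _ ▸ hx)
    exact y.2

/-- A walk through `s` is rerouted between the neighbours of `s` it uses. -/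
theorem reachAvoid_of_reachAvoid_diff_singleton {s : V}
    (hs : ∀ a b, G.Adj s a → G.Adj s b → a ∉ S → b ∉ S → ReachAvoid G S a b)
    (h : ReachAvoid G (S \ {s}) u v) (hu : u ∉ S) (hv : v ∉ S) : ReachAvoid G S u v := by
  obtain ⟨p, hp⟩ := h
  suffices H : (u ∉ S → ReachAvoid G S u v) ∧
      (u ∈ S → ∀ c, G.Adj u c → c ∉ S → ReachAvoid G S c v) from H.1 hu
  clear hu
  induction p with
  | nil => exact ⟨ReachAvoid.refl, fun h => absurd h hv⟩
  | @cons u b v hub p ih =>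
    have hS : ∀ x ∈ (Walk.cons hub p).support, x ∈ S → x = s := fun x hx h => by
      simpa [h] using hp x hx
    obtain ⟨ih₁, ih₂⟩ := ih hv (fun x hx => hp x (by simp [hx]))
    constructor
    · intro hu
      by_cases hb : b ∈ S
      · exact ih₂ hb u hub.symm hu
      · exact (hub.reachAvoid hu hb).trans (ih₁ hb)
    · intro hu c huc hc
      have hus := hS u (by simp) hu
      by_cases hb : b ∈ S
      · exact absurd (hus.trans (hS b (by simp) hb).symm) hub.ne
      · exact (hs c b (hus ▸ huc) (hus ▸ hub) hc hb).trans (ih₁ hb)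

end ReachAvoid

/-- Otherwise putting `s` back into `G ∖ S` would not decrease the number of components. -/
theorem IsCutSet.exists_adj_not_reachAvoid {V : Type} [Finite V] {G : SimpleGraph V}
    {S : Set V} (hS : IsCutSet G S) {s : V} (hs : s ∈ S) :
    ∃ a b, G.Adj s a ∧ G.Adj s b ∧ a ∉ S ∧ b ∉ S ∧ ¬ ReachAvoid G S a b := by
  by_contra! hcon
  have hle : Sᶜ ⊆ (S \ {s})ᶜ := Set.compl_subset_compl.2 Set.sdiff_subset
  have hinj : Function.Injective (ConnectedComponent.map (G.induceHomOfLE hle).toHom) := by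
    intro c d
    refine ConnectedComponent.ind₂ (fun x y hxy => ?_) c d
    rw [ConnectedComponent.map_mk, ConnectedComponent.map_mk, ConnectedComponent.eq] at hxy
    rw [ConnectedComponent.eq, ← reachAvoid_iff_reachable_induce]
    exact reachAvoid_of_reachAvoid_diff_singleton hcon ((reachAvoid_iff_reachable_induce _ _).2 hxy)
      x.2 y.2
  exact (hS s hs).not_ge (Nat.card_le_card_of_injective _ hinj)

section BinomialEdgeIdeal

variable {K} {V : Type}

theorem bedge_self (i : V) : bedge K i i = 0 := sub_self _

theorem X_inl_mul_bedge (a b c : V) :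
    X (inl b) * bedge K a c = X (inl a) * bedge K b c + X (inl c) * bedge K a b := by
  simp only [bedge]; ring

theorem X_inr_mul_bedge (a b c : V) :
    X (inr b) * bedge K a c = X (inr c) * bedge K a b + X (inr a) * bedge K b c := by
  simp only [bedge]; ring

theorem bedge_ne_zero {i j : V} (h : i ≠ j) : bedge K i j ≠ 0 := by
  classical
  intro h0
  have := congrArg (eval fun v => if v = inl i ∨ v = inr j then (1 : K) else 0) h0
  simp [bedge, h, h.symm] at this

variable {G : SimpleGraph V}

theorem bedge_mem_beIdeal {i j : V} (h : G.Adj i j) : bedge K i j ∈ beIdeal K G :=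
  Ideal.subset_span ⟨i, j, h, rfl⟩

theorem X_inl_mul_bedge_mem_beIdeal {a b c : V} (hab : G.Adj a b) (hbc : G.Adj b c) :
    X (inl b) * bedge K a c ∈ beIdeal K G := by
  rw [X_inl_mul_bedge]
  exact add_mem (Ideal.mul_mem_left _ _ (bedge_mem_beIdeal hbc))
    (Ideal.mul_mem_left _ _ (bedge_mem_beIdeal hab))

theorem X_inr_mul_bedge_mem_beIdeal {a b c : V} (hab : G.Adj a b) (hbc : G.Adj b c) :
    X (inr b) * bedge K a c ∈ beIdeal K G := by
  rw [X_inr_mul_bedge]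
  exact add_mem (Ideal.mul_mem_left _ _ (bedge_mem_beIdeal hab))
    (Ideal.mul_mem_left _ _ (bedge_mem_beIdeal hbc))

/-- Along a path from `i` to `j`, the identity `x_b f_{ij} = x_i f_{bj} + x_j f_{ib}` peels off
the first inner vertex `b`. -/
theorem bedge_mul_prod_X_mem_beIdeal_of_isPath [DecidableEq V] {i j : V} (p : G.Walk i j)
    (hp : p.IsPath) {D : Finset V} (hD : ∀ v ∈ p.support, v ≠ i → v ≠ j → v ∈ D) :
    bedge K i j * ∏ v ∈ D, X (inl v) ∈ beIdeal K G := by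
  induction p generalizing D with
  | nil => simp [bedge_self]
  | @cons i b j hib p ih =>
    rw [Walk.cons_isPath_iff] at hp
    have hi : ∀ v ∈ p.support, v ≠ i := fun v hv e => hp.2 (e ▸ hv)
    by_cases hbj : b = j
    · subst hbj
      exact Ideal.mul_mem_right _ _ (bedge_mem_beIdeal hib)
    have hbD : b ∈ D := hD b (by simp) (hi b p.start_mem_support) hbj
    have hp' := ih hp.1 (D := D.erase b) fun v hv hvb hvj =>
      Finset.mem_erase.2 ⟨hvb, hD v (by simp [hv]) (hi v hv) hvj⟩
    rw [← Finset.mul_prod_erase D _ hbD, ← mul_assoc, mul_comm (bedge K i j), X_inl_mul_bedge,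
      add_mul, mul_assoc, mul_assoc]
    exact add_mem (Ideal.mul_mem_left _ _ hp')
      (Ideal.mul_mem_left _ _ (Ideal.mul_mem_right _ _ (bedge_mem_beIdeal hib)))

end BinomialEdgeIdeal

section ComponentMap

variable {K} {V : Type} {G : SimpleGraph V} {S : Set V}

variable (G S) in
def reachAvoidSetoid : Setoid V where
  r i j := i = j ∨ ReachAvoid G S i j
  iseqv :=
    { refl := fun _ => Or.inl rfl
      symm := fun h => h.imp Eq.symm ReachAvoid.symm
      trans := by
        rintro i j k (rfl | hij) (rfl | hjk)
        exacts [Or.inl rfl, Or.inr hjk, Or.inr hij, Or.inr (hij.trans hjk)] }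

theorem reachAvoidSetoid_mk_eq_iff {i j : V} :
    (⟦i⟧ : Quotient (reachAvoidSetoid G S)) = ⟦j⟧ ↔ i = j ∨ ReachAvoid G S i j :=
  Quotient.eq

variable (G S) in
abbrev CompVar : Type :=
  (Quotient (reachAvoidSetoid G S) ⊕ Quotient (reachAvoidSetoid G S)) ⊕ V

variable (G S) in
def compExponent (v : V ⊕ V) : CompVar G S →₀ ℕ :=
  Finsupp.single (inl (Sum.map (⟦·⟧) (⟦·⟧) v)) 1 + Finsupp.single (inr (Sum.elim id id v)) 1

variable (K G S) in
open Classical in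
/-- `x_i ↦ s_{[i]} z_i` and `y_i ↦ t_{[i]} z_i` for `i ∉ S`, where `[i]` is the component of `i`
in `G ∖ S` and `s_c, t_c, z_i` are the variables `inl (inl c), inl (inr c), inr i`;
`x_i, y_i ↦ 0` for `i ∈ S`. -/
def compMap : MvPolynomial (V ⊕ V) K →ₐ[K] MvPolynomial (CompVar G S) K :=
  aeval fun v => if Sum.elim id id v ∈ S then 0 else monomial (compExponent G S v) 1

theorem compMap_X_inl {i : V} (hi : i ∉ S) :
    compMap K G S (X (inl i)) = X (inl (inl ⟦i⟧)) * X (inr i) := by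
  rw [compMap, aeval_X, if_neg (by exact hi)]
  simp only [compExponent, X, monomial_mul, one_mul]
  rfl

theorem compMap_X_inr {i : V} (hi : i ∉ S) :
    compMap K G S (X (inr i)) = X (inl (inr ⟦i⟧)) * X (inr i) := by
  rw [compMap, aeval_X, if_neg (by exact hi)]
  simp only [compExponent, X, monomial_mul, one_mul]
  rfl

theorem compMap_X_eq_zero {v : V ⊕ V} (hv : Sum.elim id id v ∈ S) :
    compMap K G S (X v) = 0 := by
  simp [compMap, hv]

theorem compMap_bedge {i j : V} (hi : i ∉ S) (hj : j ∉ S) :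
    compMap K G S (bedge K i j) = X (inr i) * X (inr j) * rename inl (bedge K ⟦i⟧ ⟦j⟧) := by
  simp only [bedge, map_sub, map_mul, compMap_X_inl hi, compMap_X_inl hj, compMap_X_inr hi,
    compMap_X_inr hj, rename_X]
  ring

theorem compMap_monomial {μ : V ⊕ V →₀ ℕ} (hμ : ∀ v, Sum.elim id id v ∈ S → μ v = 0) (c : K) :
    compMap K G S (monomial μ c) =
      monomial (Finsupp.linearCombination ℕ (compExponent G S) μ) c := by
  rw [compMap, aeval_monomial, Finsupp.linearCombination_apply, monomial_finsupp_sum_index]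
  congr 1
  refine Finsupp.prod_congr fun v hv => ?_
  rw [if_neg fun h => Finsupp.mem_support_iff.1 hv (hμ v h), monomial_pow, one_pow]

theorem X_mem_PSIdeal {v : V ⊕ V} (hv : Sum.elim id id v ∈ S) : X v ∈ PSIdeal K G S := by
  refine Ideal.mem_sup_left (Ideal.subset_span ?_)
  rcases v with i | i
  exacts [Or.inl ⟨i, hv, rfl⟩, Or.inr ⟨i, hv, rfl⟩]

theorem bedge_mem_PSIdeal {i j : V} (h : ReachAvoid G S i j) : bedge K i j ∈ PSIdeal K G S := by
  by_cases hij : i = j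
  · simp [hij, bedge_self]
  · exact Ideal.mem_sup_right (bedge_mem_beIdeal ⟨hij, h⟩)

theorem beIdeal_le_PSIdeal : beIdeal K G ≤ PSIdeal K G S := by
  refine Ideal.span_le.2 ?_
  rintro _ ⟨i, j, hij, rfl⟩
  by_cases hi : i ∈ S
  · exact sub_mem (Ideal.mul_mem_right _ _ (X_mem_PSIdeal (v := inl i) hi))
      (Ideal.mul_mem_left _ _ (X_mem_PSIdeal (v := inr i) hi))
  by_cases hj : j ∈ S
  · exact sub_mem (Ideal.mul_mem_left _ _ (X_mem_PSIdeal (v := inr j) hj))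
      (Ideal.mul_mem_right _ _ (X_mem_PSIdeal (v := inl j) hj))
  exact bedge_mem_PSIdeal (hij.reachAvoid hi hj)

theorem PSIdeal_le_ker_compMap : PSIdeal K G S ≤ RingHom.ker (compMap K G S) := by
  refine sup_le (Ideal.span_le.2 ?_) (Ideal.span_le.2 ?_)
  · rintro _ (⟨i, hi, rfl⟩ | ⟨i, hi, rfl⟩)
    exacts [compMap_X_eq_zero (v := inl i) hi, compMap_X_eq_zero (v := inr i) hi]
  · rintro _ ⟨i, j, ⟨-, hij⟩, rfl⟩
    have hq : (⟦i⟧ : Quotient (reachAvoidSetoid G S)) = ⟦j⟧ :=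
      reachAvoidSetoid_mk_eq_iff.2 (Or.inr hij)
    simp [RingHom.mem_ker, compMap_bedge hij.notMem_left hij.notMem_right, hq, bedge_self]

end ComponentMap

theorem exists_eq_single_add {σ : Type} {μ : σ →₀ ℕ} {a : σ} (h : μ a ≠ 0) :
    ∃ ν, μ = Finsupp.single a 1 + ν :=
  exists_add_of_le (Finsupp.single_le_iff.2 (Nat.one_le_iff_ne_zero.2 h))

section Kernel

variable {K} {V : Type} [LinearOrder V] {G : SimpleGraph V} {S : Set V}

variable (G S) in
/-- Exponents of the standard monomials modulo `P_S`: no variable of `S` occurs, and no `y_i x_j`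
with `i < j` in the same component, since `y_i x_j ≡ x_i y_j` modulo `f_{ij}`. -/
def IsCanonical (μ : V ⊕ V →₀ ℕ) : Prop :=
  (∀ v, Sum.elim id id v ∈ S → μ v = 0) ∧
    ∀ i j, i < j → ReachAvoid G S i j → μ (inr i) = 0 ∨ μ (inl j) = 0

variable [Fintype V]

/-- Rewriting `y_i x_j ↦ x_i y_j` moves an `x` to a smaller vertex, which decreases
`∑ₖ #{j < k} · μ(x_k)`. -/
theorem monomial_mem_PSIdeal_sup_restrictSupport (μ : V ⊕ V →₀ ℕ) (c : K) :
    monomial μ c ∈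
      (PSIdeal K G S).restrictScalars K ⊔ restrictSupport K {μ | IsCanonical G S μ} := by
  set rank : V → ℕ := fun k => (Finset.univ.filter (· < k)).card
  have hrank : StrictMono rank := fun i j hij =>
    Finset.card_lt_card <| (Finset.ssubset_iff_of_subset fun k hk => by
      simp only [Finset.mem_filter] at hk ⊢; exact ⟨hk.1, hk.2.trans hij⟩).2 ⟨i, by simp [hij]⟩
  induction h : Finsupp.weight (Sum.elim rank 0) μ using Nat.strong_induction_on
    generalizing μ c with
  | _ N ih =>
  by_cases hS : ∃ v, Sum.elim id id v ∈ S ∧ μ v ≠ 0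
  · obtain ⟨v, hv, hμv⟩ := hS
    obtain ⟨ν, rfl⟩ := exists_eq_single_add hμv
    rw [monomial_single_add, pow_one]
    exact Submodule.mem_sup_left (Ideal.mul_mem_right _ _ (X_mem_PSIdeal hv))
  by_cases hC : IsCanonical G S μ
  · exact Submodule.mem_sup_right ((monomial_mem_restrictSupport K).2 (Or.inl hC))
  obtain ⟨i, j, hij, hRA, hyi, hxj⟩ : ∃ i j, i < j ∧ ReachAvoid G S i j ∧
      μ (inr i) ≠ 0 ∧ μ (inl j) ≠ 0 := by
    by_contra! h
    exact hC ⟨fun v hv => not_not.1 fun h' => hS ⟨v, hv, h'⟩,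
      fun i j hij hRA => or_iff_not_imp_left.2 (h i j hij hRA)⟩
  obtain ⟨μ₁, rfl⟩ := exists_eq_single_add hyi
  obtain ⟨ν, rfl⟩ := exists_eq_single_add (a := inl j) (μ := μ₁) (by simpa using hxj)
  have hswap : monomial (Finsupp.single (inr i) 1 + (Finsupp.single (inl j) 1 + ν)) c =
      monomial (Finsupp.single (inl i) 1 + (Finsupp.single (inr j) 1 + ν)) c -
        bedge K i j * monomial ν c := by
    simp only [monomial_single_add, pow_one, bedge]
    ring
  have hweight : Finsupp.weight (Sum.elim rank 0)
      (Finsupp.single (inl i) 1 + (Finsupp.single (inr j) 1 + ν)) < N := by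
    rw [← h]
    simpa [Finsupp.weight_single] using hrank hij
  rw [hswap]
  exact sub_mem (ih _ hweight _ _ rfl)
    (Submodule.mem_sup_left (Ideal.mul_mem_right _ _ (bedge_mem_PSIdeal hRA)))

theorem mem_PSIdeal_sup_restrictSupport (p : MvPolynomial (V ⊕ V) K) :
    p ∈ (PSIdeal K G S).restrictScalars K ⊔ restrictSupport K {μ | IsCanonical G S μ} := by
  rw [p.as_sum]
  exact Submodule.sum_mem _ fun μ _ => monomial_mem_PSIdeal_sup_restrictSupport μ _

theorem linearCombination_compExponent_inr (μ : V ⊕ V →₀ ℕ) (k : V) :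
    Finsupp.linearCombination ℕ (compExponent G S) μ (inr k) = μ (inl k) + μ (inr k) := by
  classical
  rw [Finsupp.linearCombination_apply, Finsupp.sum_apply, Finsupp.sum_fintype _ _ (by simp),
    Fintype.sum_sum_type]
  simp [compExponent, Finsupp.single_apply]

open Classical in
theorem linearCombination_compExponent_inl_inl (μ : V ⊕ V →₀ ℕ) (i : V) :
    Finsupp.linearCombination ℕ (compExponent G S) μ (inl (inl ⟦i⟧)) =
      ∑ k ∈ Finset.univ.filter fun k => (⟦k⟧ : Quotient (reachAvoidSetoid G S)) = ⟦i⟧,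
        μ (inl k) := by
  rw [Finsupp.linearCombination_apply, Finsupp.sum_apply, Finsupp.sum_fintype _ _ (by simp),
    Fintype.sum_sum_type, Finset.sum_filter]
  simp [compExponent, Finsupp.single_apply]

/-- In a canonical `μ'`, if `y_i` occurs then no `x_j` with `j > i` in the component of `i`
does, so `μ'(x_i)` is the largest value compatible with the component sum. -/
theorem IsCanonical.apply_inl_le {μ μ' : V ⊕ V →₀ ℕ} (hμ' : IsCanonical G S μ')
    (h : Finsupp.linearCombination ℕ (compExponent G S) μ =
      Finsupp.linearCombination ℕ (compExponent G S) μ')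
    {i : V} (hlt : ∀ j < i, μ (inl j) = μ' (inl j)) : μ (inl i) ≤ μ' (inl i) := by
  classical
  by_contra! hi
  have hz := congrArg (· (inr i)) h
  simp only [linearCombination_compExponent_inr] at hz
  have hyi : μ' (inr i) ≠ 0 := by omega
  have hsum := congrArg (· (inl (inl ⟦i⟧))) h
  simp only [linearCombination_compExponent_inl_inl] at hsum
  set F := Finset.univ.filter fun k => (⟦k⟧ : Quotient (reachAvoidSetoid G S)) = ⟦i⟧
  have hiF : i ∈ F.filter (¬ · < i) := by simp [F]
  have hbelow : ∑ k ∈ F.filter (· < i), μ (inl k) = ∑ k ∈ F.filter (· < i), μ' (inl k) :=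
    Finset.sum_congr rfl fun k hk => hlt k (Finset.mem_filter.1 hk).2
  have habove : ∑ k ∈ F.filter (¬ · < i), μ' (inl k) = μ' (inl i) := by
    refine Finset.sum_eq_single_of_mem i hiF fun k hk hki => ?_
    simp only [F, Finset.mem_filter, Finset.mem_univ, true_and, not_lt] at hk
    have hik : i < k := lt_of_le_of_ne hk.2 (Ne.symm hki)
    have hRA := (reachAvoidSetoid_mk_eq_iff.1 hk.1.symm).resolve_left hik.ne
    exact (hμ'.2 i k hik hRA).resolve_left hyi
  have hle : μ (inl i) ≤ ∑ k ∈ F.filter (¬ · < i), μ (inl k) :=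
    Finset.single_le_sum (f := fun k => μ (inl k)) (fun _ _ => Nat.zero_le _) hiF
  rw [← Finset.sum_filter_add_sum_filter_not F (· < i),
    ← Finset.sum_filter_add_sum_filter_not F (· < i)] at hsum
  omega

theorem linearCombination_compExponent_injOn :
    Set.InjOn (Finsupp.linearCombination ℕ (compExponent G S)) {μ | IsCanonical G S μ} := by
  intro μ hμ μ' hμ' h
  have hinl : ∀ i, μ (inl i) = μ' (inl i) := fun i => by
    induction i using WellFoundedLT.induction with
    | _ i ih =>
      exact le_antisymm (IsCanonical.apply_inl_le hμ' h ih)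
        (IsCanonical.apply_inl_le hμ h.symm fun j hj => (ih j hj).symm)
  ext (i | i)
  · exact hinl i
  · have hz := congrArg (· (inr i)) h
    simp only [linearCombination_compExponent_inr] at hz
    have := hinl i
    omega

theorem eq_zero_of_compMap_eq_zero {p : MvPolynomial (V ⊕ V) K}
    (hp : p ∈ restrictSupport K {μ | IsCanonical G S μ}) (h : compMap K G S p = 0) : p = 0 := by
  classical
  rw [mem_restrictSupport_iff] at hp
  by_contra hne
  obtain ⟨μ, hμ⟩ := support_nonempty.2 hne
  have hcoeff : coeff (Finsupp.linearCombination ℕ (compExponent G S) μ) (compMap K G S p) =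
      coeff μ p := by
    conv_lhs => rw [p.as_sum, map_sum]
    rw [coeff_sum, Finset.sum_eq_single_of_mem μ hμ]
    · rw [compMap_monomial (hp hμ).1, coeff_monomial, if_pos rfl]
    · intro ν hν hνμ
      rw [compMap_monomial (hp hν).1, coeff_monomial,
        if_neg fun e => hνμ (linearCombination_compExponent_injOn (hp hν) (hp hμ) e)]
  rw [h, coeff_zero] at hcoeff
  exact mem_support_iff.1 hμ hcoeff.symm

theorem ker_compMap : RingHom.ker (compMap K G S) = PSIdeal K G S := by
  refine le_antisymm (fun p hp => ?_) PSIdeal_le_ker_compMap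
  obtain ⟨q, hq, m, hm, rfl⟩ := Submodule.mem_sup.1 (mem_PSIdeal_sup_restrictSupport (G := G) p)
  have hq' : q ∈ PSIdeal K G S := hq
  rw [RingHom.mem_ker, map_add, PSIdeal_le_ker_compMap hq', zero_add] at hp
  rw [eq_zero_of_compMap_eq_zero hm hp, add_zero]
  exact hq'

end Kernel

section Colon

variable {K} {V : Type} {G : SimpleGraph V} {S : Set V} {f : MvPolynomial (V ⊕ V) K}

theorem PSIdeal_le_colon (hS : ∀ s ∈ S, X (inl s) * f ∈ beIdeal K G ∧ X (inr s) * f ∈ beIdeal K G)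
    (hE : ∀ i j, (tildeG G S).Adj i j → bedge K i j * f ∈ beIdeal K G) :
    PSIdeal K G S ≤ (beIdeal K G).colon (Ideal.span {f}) := by
  refine sup_le (Ideal.span_le.2 ?_) (Ideal.span_le.2 ?_) <;>
    simp only [Set.subset_def, SetLike.mem_coe, Ideal.span, Submodule.mem_colon_span_singleton,
      smul_eq_mul]
  · rintro _ (⟨s, hs, rfl⟩ | ⟨s, hs, rfl⟩)
    exacts [(hS s hs).1, (hS s hs).2]
  · rintro _ ⟨i, j, hij, rfl⟩
    exact hE i j hij

theorem colon_le_PSIdeal [LinearOrder V] [Fintype V] (hf : compMap K G S f ≠ 0) :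
    (beIdeal K G).colon (Ideal.span {f}) ≤ PSIdeal K G S := by
  intro g hg
  rw [Ideal.span, Submodule.mem_colon_span_singleton, smul_eq_mul] at hg
  have hgf := beIdeal_le_PSIdeal (S := S) hg
  rw [← ker_compMap, RingHom.mem_ker, map_mul] at hgf
  rw [← ker_compMap, RingHom.mem_ker]
  exact (mul_eq_zero.1 hgf).resolve_right hf

end Colon

section Cycle

variable {K} {n : ℕ} [NeZero n]

theorem cycleGraph_adj_eq_sub_one_or_eq_add_one {u v : Fin n} (h : (cycleGraph n).Adj v u) :
    u = v - 1 ∨ u = v + 1 := by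
  obtain _ | _ | m := n
  · exact v.elim0
  · exact absurd h cycleGraph_one_adj
  · have hu : u ∈ (cycleGraph (m + 2)).neighborSet v := h
    simpa [cycleGraph_neighborSet] using hu

theorem IsCutSet.cycleGraph_adj_not_reachAvoid {S : Set (Fin n)} (hS : IsCutSet (cycleGraph n) S)
    {s : Fin n} (hs : s ∈ S) :
    (cycleGraph n).Adj s (s - 1) ∧ (cycleGraph n).Adj s (s + 1) ∧ s - 1 ∉ S ∧ s + 1 ∉ S ∧
      ¬ ReachAvoid (cycleGraph n) S (s - 1) (s + 1) := by
  obtain ⟨a, b, ha, hb, haS, hbS, hab⟩ := hS.exists_adj_not_reachAvoid hs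
  have hne : a ≠ b := by
    rintro rfl
    exact hab (ReachAvoid.refl haS)
  rcases cycleGraph_adj_eq_sub_one_or_eq_add_one ha with rfl | rfl <;>
    rcases cycleGraph_adj_eq_sub_one_or_eq_add_one hb with rfl | rfl
  exacts [absurd rfl hne, ⟨ha, hb, haS, hbS, hab⟩, ⟨hb, ha, hbS, haS, fun h => hab h.symm⟩,
    absurd rfl hne]

theorem ncard_cycleGraph_neighbors_of_isPath {S : Set (Fin n)} {i j : Fin n}
    {p : (cycleGraph n).Walk i j} (hp : p.IsPath) (hpS : ∀ v ∈ p.support, v ∉ S) {v : Fin n}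
    (hv : v ∈ p.support) (hvi : v ≠ i) (hvj : v ≠ j) :
    {u | u ∉ S ∧ (cycleGraph n).Adj v u}.ncard = 2 := by
  obtain ⟨u, u', hne, hu, hu', hup, hup'⟩ := hp.exists_adj_ne_of_mem_support hv hvi hvj
  have hset : {u | u ∉ S ∧ (cycleGraph n).Adj v u} = {u, u'} := by
    ext x
    refine ⟨fun ⟨_, hx⟩ => ?_, ?_⟩
    · rcases cycleGraph_adj_eq_sub_one_or_eq_add_one hx with rfl | rfl <;>
        rcases cycleGraph_adj_eq_sub_one_or_eq_add_one hu with rfl | rfl <;>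
        rcases cycleGraph_adj_eq_sub_one_or_eq_add_one hu' with rfl | rfl <;> simp_all
    · rintro (rfl | rfl)
      exacts [⟨hpS _ hup, hu⟩, ⟨hpS _ hup', hu'⟩]
  rw [hset, Set.ncard_pair hne]

theorem bedge_mul_prod_X_mem_of_tildeG_adj {S : Set (Fin n)} {D : Finset (Fin n)}
    (hD : ∀ v, v ∉ S → {u | u ∉ S ∧ (cycleGraph n).Adj v u}.ncard = 2 → v ∈ D) {i j : Fin n}
    (h : (tildeG (cycleGraph n) S).Adj i j) :
    bedge K i j * ∏ v ∈ D, X (inl v) ∈ beIdeal K (cycleGraph n) := by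
  obtain ⟨-, p, hpS⟩ := h
  have hbS : ∀ v ∈ p.bypass.support, v ∉ S := fun v hv =>
    hpS v (p.support_bypass_subset_support hv)
  refine bedge_mul_prod_X_mem_beIdeal_of_isPath p.bypass p.bypass_isPath fun v hv hvi hvj => ?_
  exact hD v (hbS v hv) (ncard_cycleGraph_neighbors_of_isPath p.bypass_isPath hbS hv hvi hvj)

theorem compMap_prod_bedge_mul_prod_X_ne_zero {S : Finset (Fin n)}
    (hS : IsCutSet (cycleGraph n) ↑S) {D : Finset (Fin n)} (hD : ∀ v ∈ D, v ∉ S) :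
    compMap K (cycleGraph n) ↑S ((∏ s ∈ S, bedge K (s - 1) (s + 1)) * ∏ v ∈ D, X (inl v)) ≠ 0 := by
  simp only [map_mul, map_prod]
  refine mul_ne_zero (Finset.prod_ne_zero_iff.2 fun s hs => ?_)
    (Finset.prod_ne_zero_iff.2 fun v hv => ?_)
  · obtain ⟨-, -, hs₁, hs₂, hsep⟩ := hS.cycleGraph_adj_not_reachAvoid hs
    have hcomp : (⟦s - 1⟧ : Quotient (reachAvoidSetoid (cycleGraph n) ↑S)) ≠ ⟦s + 1⟧ := by
      rw [Ne, reachAvoidSetoid_mk_eq_iff]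
      rintro (h | h)
      exacts [hsep (h ▸ ReachAvoid.refl hs₁), hsep h]
    rw [compMap_bedge hs₁ hs₂]
    exact mul_ne_zero (mul_ne_zero (X_ne_zero _) (X_ne_zero _))
      ((map_ne_zero_iff _ (rename_injective _ inl_injective)).2 (bedge_ne_zero hcomp))
  · rw [compMap_X_inl (hD v hv)]
    exact mul_ne_zero (X_ne_zero _) (X_ne_zero _)

end Cycle

theorem statement_11 {n : ℕ} [NeZero n] (S : Finset (Fin n))
    (hcut : IsCutSet (SimpleGraph.cycleGraph n) (↑S : Set (Fin n))) :
    Submodule.colon (beIdeal K (SimpleGraph.cycleGraph n))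
      (Ideal.span {(∏ s ∈ S, bedge K (s - 1) (s + 1)) *
        ∏ v ∈ (Set.toFinite {v : Fin n | v ∉ (↑S : Set (Fin n)) ∧
            Set.ncard {u : Fin n | u ∉ (↑S : Set (Fin n)) ∧
              (SimpleGraph.cycleGraph n).Adj v u} = 2}).toFinset,
          (X (Sum.inl v) : MvPolynomial (Fin n ⊕ Fin n) K)}) =
      PSIdeal K (SimpleGraph.cycleGraph n) (↑S : Set (Fin n)) := by
  set D := (Set.toFinite {v : Fin n | v ∉ (↑S : Set (Fin n)) ∧
    Set.ncard {u : Fin n | u ∉ (↑S : Set (Fin n)) ∧ (cycleGraph n).Adj v u} = 2}).toFinset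
  have hD : ∀ v, v ∈ D ↔ v ∉ (↑S : Set (Fin n)) ∧
      Set.ncard {u : Fin n | u ∉ (↑S : Set (Fin n)) ∧ (cycleGraph n).Adj v u} = 2 :=
    fun v => Set.Finite.mem_toFinset _
  refine le_antisymm
    (colon_le_PSIdeal (compMap_prod_bedge_mul_prod_X_ne_zero hcut fun v hv => ((hD v).1 hv).1))
    (PSIdeal_le_colon (fun s hs => ?_) fun i j hij => ?_)
  · obtain ⟨hs₁, hs₂, -⟩ := hcut.cycleGraph_adj_not_reachAvoid hs
    have hdvd : ∀ x : MvPolynomial (Fin n ⊕ Fin n) K, x * bedge K (s - 1) (s + 1) ∣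
        x * ((∏ s ∈ S, bedge K (s - 1) (s + 1)) * ∏ v ∈ D, X (inl v)) := fun x =>
      mul_dvd_mul_left x (dvd_mul_of_dvd_left (Finset.dvd_prod_of_mem _ hs) _)
    exact ⟨Ideal.mem_of_dvd _ (hdvd _) (X_inl_mul_bedge_mem_beIdeal hs₁.symm hs₂),
      Ideal.mem_of_dvd _ (hdvd _) (X_inr_mul_bedge_mem_beIdeal hs₁.symm hs₂)⟩
  · exact Ideal.mem_of_dvd _ (mul_dvd_mul_left _ (dvd_mul_left _ _))
      (bedge_mul_prod_X_mem_of_tildeG_adj (fun v hv hdeg => (hD v).2 ⟨hv, hdeg⟩) hij)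

end

end Paper
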